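/- Let (X, 𝒜, μ) be a probability space, U > 0, and let m₁, m₂ : X → ℝ be measurable functions with sup_x |m₁(x)| ≤ U and sup_x |m₂(x)| ≤ U. Define h² = ∫_X ∫_ℝ ( √(p_{m₁}(y,x)) − √(p_{m₂}(y,x)) )² dy dμ(x), where p_m(y,x) = (2π)^{−1/2} exp(−(y − m(x))²/2). Then, with the explicit constant C₂(U) = (1 − e^{−U²/2})/(2U²) > 0, one has C₂(U) · ∫_X (m₁ − m₂)² dμ ≤ h² ≤ (1/4) ∫_X (m₁ − m₂)² dμ. -/

import Mathlib

/-!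
The Hellinger affinity of two unit-variance Gaussians is explicit: completing the square,
`√(p_a p_b) = e^{-(a-b)²/8} p_{(a+b)/2}`, so the inner integral equals
`2 - 2 e^{-(m₁-m₂)²/8}`.
The upper bound is then `1 - e^{-s} ≤ s`. For the lower bound, `s ↦ 1 - e^{-s}` is concave and
vanishes at `0`, so on `[0, T]` it lies above its chord; since `|m₁ - m₂| ≤ 2U`, the relevant
range is `T = U²/2`, which produces the constant `C₂(U)`.
-/

open MeasureTheory

/-- The Gaussian regression density with mean `m`: `y ↦ (2π)^{-1/2} exp(-(y-m)²/2)`. -/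
noncomputable def gaussDensity (m y : ℝ) : ℝ :=
  (Real.sqrt (2 * Real.pi))⁻¹ * Real.exp (-(y - m) ^ 2 / 2)

open Real ProbabilityTheory

lemma gaussDensity_eq_gaussianPDFReal (m y : ℝ) :
    gaussDensity m y = gaussianPDFReal m 1 y := by
  simp [gaussDensity, gaussianPDFReal]

lemma gaussDensity_nonneg (m y : ℝ) : 0 ≤ gaussDensity m y := by
  unfold gaussDensity; positivity

lemma sqrt_gaussDensity_mul_sqrt_gaussDensity (a b y : ℝ) :
    √(gaussDensity a y) * √(gaussDensity b y) =
      exp (-(a - b) ^ 2 / 8) * gaussDensity ((a + b) / 2) y := by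
  have hprod : gaussDensity a y * gaussDensity b y =
      (exp (-(a - b) ^ 2 / 8) * gaussDensity ((a + b) / 2) y) ^ 2 := by
    simp only [gaussDensity, mul_pow, ← exp_nat_mul]
    rw [mul_mul_mul_comm, ← exp_add, ← sq, ← mul_assoc, mul_comm (exp _), mul_assoc,
      ← exp_add]
    ring_nf
  rw [← sqrt_mul (gaussDensity_nonneg a y), hprod,
    sqrt_sq (mul_nonneg (exp_pos _).le (gaussDensity_nonneg _ y))]

lemma integral_sq_sub_sqrt_gaussDensity (a b : ℝ) :
    ∫ y, (√(gaussDensity a y) - √(gaussDensity b y)) ^ 2 =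
      2 - 2 * exp (-(a - b) ^ 2 / 8) := by
  have hint (m : ℝ) : Integrable (gaussDensity m) := by
    simpa only [← funext (gaussDensity_eq_gaussianPDFReal m)] using
      integrable_gaussianPDFReal m 1
  have hone (m : ℝ) : ∫ y, gaussDensity m y = 1 := by
    simpa only [gaussDensity_eq_gaussianPDFReal] using
      integral_gaussianPDFReal_eq_one m one_ne_zero
  have hexpand (y : ℝ) : (√(gaussDensity a y) - √(gaussDensity b y)) ^ 2 =
      gaussDensity a y + gaussDensity b y -
        2 * (exp (-(a - b) ^ 2 / 8) * gaussDensity ((a + b) / 2) y) := by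
    rw [sub_sq, sq_sqrt (gaussDensity_nonneg a y), sq_sqrt (gaussDensity_nonneg b y), mul_assoc,
      sqrt_gaussDensity_mul_sqrt_gaussDensity]
    ring
  simp_rw [hexpand]
  rw [integral_sub (f := fun y => gaussDensity a y + gaussDensity b y)
      ((hint a).add (hint b)) (((hint _).const_mul _).const_mul _),
    integral_add (hint a) (hint b), integral_const_mul, integral_const_mul, hone, hone, hone]
  ring

lemma mul_one_sub_exp_neg_le {t T : ℝ} (ht : 0 ≤ t) (htT : t ≤ T) :
    t * (1 - exp (-T)) ≤ T * (1 - exp (-t)) := by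
  rcases htT.eq_or_lt with rfl | htT'
  · rfl
  have hT : 0 < T := ht.trans_lt htT'
  have hconv := convexOn_exp.2 (Set.mem_univ 0) (Set.mem_univ (-T))
    (sub_nonneg.2 ((div_le_one hT).2 htT)) (div_nonneg ht hT.le) (sub_add_cancel 1 (t / T))
  simp only [smul_eq_mul, mul_zero, zero_add, exp_zero, mul_one] at hconv
  rw [show t / T * -T = -t by field_simp] at hconv
  have := mul_le_mul_of_nonneg_left hconv hT.le
  field_simp at this
  linarith

lemma two_sub_two_exp_neg_le (d : ℝ) : 2 - 2 * exp (-d ^ 2 / 8) ≤ 1 / 4 * d ^ 2 := by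
  linarith [add_one_le_exp (-d ^ 2 / 8)]

lemma le_two_sub_two_exp_neg {U d : ℝ} (hU : 0 < U) (hd : |d| ≤ 2 * U) :
    (1 - exp (-U ^ 2 / 2)) / (2 * U ^ 2) * d ^ 2 ≤ 2 - 2 * exp (-d ^ 2 / 8) := by
  have hdU : d ^ 2 / 8 ≤ U ^ 2 / 2 := by
    nlinarith [sq_le_sq' (abs_le.1 hd).1 (abs_le.1 hd).2]
  have key := mul_one_sub_exp_neg_le (by positivity) hdU
  rw [← neg_div, ← neg_div] at key
  rw [div_mul_eq_mul_div, div_le_iff₀ (by positivity)]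
  nlinarith

/-- On models uniformly bounded by `U`, the squared Hellinger distance in the
random-design Gaussian regression model is equivalent to the squared `L²(μ)` prediction
risk, with explicit constant `C₂(U) = (1 - e^{-U²/2})/(2U²) > 0`:
`C₂(U) ∫ (m₁-m₂)² dμ ≤ h² ≤ (1/4) ∫ (m₁-m₂)² dμ`. -/
theorem sq_hellinger_equiv_prediction_risk {X : Type*} [MeasurableSpace X]
    (μ : Measure X) [IsProbabilityMeasure μ]
    (U : ℝ) (hU : 0 < U)
    (m₁ m₂ : X → ℝ) (hm₁ : Measurable m₁) (hm₂ : Measurable m₂)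
    (hb₁ : ∀ x, |m₁ x| ≤ U) (hb₂ : ∀ x, |m₂ x| ≤ U) :
    0 < (1 - Real.exp (-U ^ 2 / 2)) / (2 * U ^ 2) ∧
    (1 - Real.exp (-U ^ 2 / 2)) / (2 * U ^ 2) * ∫ x, (m₁ x - m₂ x) ^ 2 ∂μ ≤
      ∫ x, (∫ y, (Real.sqrt (gaussDensity (m₁ x) y) -
        Real.sqrt (gaussDensity (m₂ x) y)) ^ 2) ∂μ ∧
    ∫ x, (∫ y, (Real.sqrt (gaussDensity (m₁ x) y) -
        Real.sqrt (gaussDensity (m₂ x) y)) ^ 2) ∂μ ≤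
      (1 / 4) * ∫ x, (m₁ x - m₂ x) ^ 2 ∂μ := by
  have hd (x : X) : |m₁ x - m₂ x| ≤ 2 * U :=
    (abs_sub _ _).trans (by linarith [hb₁ x, hb₂ x])
  have hsq : Integrable (fun x => (m₁ x - m₂ x) ^ 2) μ :=
    .of_bound ((hm₁.sub hm₂).pow_const 2).aestronglyMeasurable (4 * U ^ 2) <|
      .of_forall fun x => by
        rw [norm_pow, Real.norm_eq_abs]; nlinarith [abs_nonneg (m₁ x - m₂ x), hd x]
  have hH : Integrable (fun x => 2 - 2 * exp (-(m₁ x - m₂ x) ^ 2 / 8)) μ :=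
    .of_bound (by fun_prop) 2 <| .of_forall fun x => by
      have : exp (-(m₁ x - m₂ x) ^ 2 / 8) ≤ 1 := exp_le_one_iff.2 (by nlinarith)
      rw [Real.norm_eq_abs, abs_le]; constructor <;> linarith [exp_pos (-(m₁ x - m₂ x) ^ 2 / 8)]
  simp_rw [integral_sq_sub_sqrt_gaussDensity]
  refine ⟨div_pos (sub_pos.2 (exp_lt_one_iff.2 (by nlinarith))) (by positivity), ?_, ?_⟩
  · rw [← integral_const_mul]
    exact integral_mono (hsq.const_mul _) hH fun x => le_two_sub_two_exp_neg hU (hd x)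
  · rw [← integral_const_mul]
    exact integral_mono hH (hsq.const_mul _) fun x => two_sub_two_exp_neg_le _
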